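/- Fix Y ∈ ℝ^{D×N} and λ_e, λ_z ≥ 0. Consider the problem of minimizing g(C, A, E) = ‖C‖₁ + λ_e‖E‖₁ + (λ_z/2)‖Y − YA − E‖_F² over all C, A ∈ ℝ^{N×N} and E ∈ ℝ^{D×N} subject to Aᵀ𝟙 = 𝟙 and A = C − diag(C). At any minimizer (C, A, E) of this problem one has diag(C) = 0, and consequently A = C. -/

import Mathlib

/-!
The matrix `A = C - diag(C)` has zero diagonal, so `(A, A, E)` is again feasible and changes
only the `‖·‖₁` term of the objective. Since `A` and `diag(C)` have disjoint supports and sum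
to `C`, `‖C‖₁ = ‖A‖₁ + ‖diag(C)‖₁`, so minimality of `(C, A, E)` forces `‖diag(C)‖₁ ≤ 0`.
-/

open Matrix
/-- The entrywise ℓ¹ norm of a real matrix: sum of absolute values of entries. -/
def matL1 {m n : Type*} [Fintype m] [Fintype n] (M : Matrix m n ℝ) : ℝ :=
  ∑ i, ∑ j, |M i j|

/-- The squared Frobenius norm of a real matrix. -/
def frobSq {m n : Type*} [Fintype m] [Fintype n] (M : Matrix m n ℝ) : ℝ :=
  ∑ i, ∑ j, (M i j) ^ 2

/-- The matrix keeping only the diagonal entries of a square matrix. -/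
def diagPart {n : Type*} [DecidableEq n] (C : Matrix n n ℝ) : Matrix n n ℝ :=
  Matrix.diagonal (fun i => C i i)

section MatL1

variable {m n : Type*} [Fintype m] [Fintype n]

theorem matL1_nonneg (M : Matrix m n ℝ) : 0 ≤ matL1 M :=
  Finset.sum_nonneg fun _ _ => Finset.sum_nonneg fun _ _ => abs_nonneg _

theorem matL1_eq_zero_iff {M : Matrix m n ℝ} : matL1 M = 0 ↔ M = 0 := by
  have hrow (i : m) : 0 ≤ ∑ j, |M i j| := Finset.sum_nonneg fun _ _ => abs_nonneg _
  rw [matL1, Fintype.sum_eq_zero_iff_of_nonneg hrow, ← Matrix.ext_iff]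
  simp only [funext_iff, Pi.zero_apply, Matrix.zero_apply]
  refine forall_congr' fun i => ?_
  rw [Fintype.sum_eq_zero_iff_of_nonneg fun j => abs_nonneg (M i j)]
  simp only [funext_iff, Pi.zero_apply, abs_eq_zero]

end MatL1

section DiagPart

variable {n : Type*} [DecidableEq n]

theorem diagPart_sub_diagPart (C : Matrix n n ℝ) : diagPart (C - diagPart C) = 0 := by
  ext i j
  simp [diagPart, Matrix.diagonal_apply]

theorem matL1_eq_matL1_sub_diagPart_add [Fintype n] (C : Matrix n n ℝ) :
    matL1 C = matL1 (C - diagPart C) + matL1 (diagPart C) := by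
  simp only [matL1, ← Finset.sum_add_distrib]
  refine Finset.sum_congr rfl fun i _ => Finset.sum_congr rfl fun j _ => ?_
  by_cases hij : i = j
  · subst hij
    simp [diagPart]
  · simp [diagPart, Matrix.diagonal_apply_ne _ hij]

end DiagPart

theorem minimizer_diag_eq_zero_general {D N : ℕ} (Y : Matrix (Fin D) (Fin N) ℝ)
    (lam_e lam_z : ℝ)
    (C A : Matrix (Fin N) (Fin N) ℝ) (E : Matrix (Fin D) (Fin N) ℝ)
    (hA1 : Aᵀ.mulVec (fun _ => (1 : ℝ)) = fun _ => (1 : ℝ))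
    (hAC : A = C - diagPart C)
    (hmin : ∀ (C' A' : Matrix (Fin N) (Fin N) ℝ) (E' : Matrix (Fin D) (Fin N) ℝ),
      A'ᵀ.mulVec (fun _ => (1 : ℝ)) = (fun _ => (1 : ℝ)) → A' = C' - diagPart C' →
      matL1 C + lam_e * matL1 E + lam_z / 2 * frobSq (Y - Y * A - E) ≤
        matL1 C' + lam_e * matL1 E' + lam_z / 2 * frobSq (Y - Y * A' - E')) :
    diagPart C = 0 ∧ A = C := by
  have hA : diagPart A = 0 := hAC ▸ diagPart_sub_diagPart C
  have hcompare := hmin A A E hA1 (by rw [hA, sub_zero])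
  have hdiag_le : matL1 (diagPart C) ≤ 0 := by
    rw [matL1_eq_matL1_sub_diagPart_add C, ← hAC] at hcompare
    linarith
  have hC : diagPart C = 0 :=
    matL1_eq_zero_iff.1 (le_antisymm hdiag_le (matL1_nonneg _))
  exact ⟨hC, by rw [hAC, hC, sub_zero]⟩

/-- At any minimizer of `‖C‖₁ + λ_e ‖E‖₁ + (λ_z/2) ‖Y - YA - E‖_F²` subject to
`Aᵀ𝟙 = 𝟙` and `A = C - diag(C)`, one has `diag(C) = 0`, and consequently `A = C`. -/
theorem minimizer_diag_eq_zero {D N : ℕ} (Y : Matrix (Fin D) (Fin N) ℝ)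
    (lam_e lam_z : ℝ) (hle : 0 ≤ lam_e) (hlz : 0 ≤ lam_z)
    (C A : Matrix (Fin N) (Fin N) ℝ) (E : Matrix (Fin D) (Fin N) ℝ)
    (hA1 : Aᵀ.mulVec (fun _ => (1 : ℝ)) = fun _ => (1 : ℝ))
    (hAC : A = C - diagPart C)
    (hmin : ∀ (C' A' : Matrix (Fin N) (Fin N) ℝ) (E' : Matrix (Fin D) (Fin N) ℝ),
      A'ᵀ.mulVec (fun _ => (1 : ℝ)) = (fun _ => (1 : ℝ)) → A' = C' - diagPart C' →
      matL1 C + lam_e * matL1 E + lam_z / 2 * frobSq (Y - Y * A - E) ≤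
        matL1 C' + lam_e * matL1 E' + lam_z / 2 * frobSq (Y - Y * A' - E')) :
    diagPart C = 0 ∧ A = C :=
  minimizer_diag_eq_zero_general Y lam_e lam_z C A E hA1 hAC hmin
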